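/- Let μ, ξ > 0 and q real, and suppose λ₁ = √(q² + ξ/μ), λ₂ = √(q² + ξ/(2μ)). For any boundary data (T₁, T₂) ∈ ℂ², the linear system in unknowns (A, B) given by matching the stress boundary conditions for the combination v = A·∇⊥(e^{iqx+λ₁y}) + B·∇(e^{iqx+λ₂y}) at y = 0, namely μ(∂ₓv_y + ∂ᵧvₓ)|_{y=0} = T₁e^{iqx} and 2μ∂ᵧv_y|_{y=0} = T₂e^{iqx}, has a unique solution whenever q ≠ 0; explicitly, the determinant of the 2×2 coefficient matrix equals D(q) = 4μ²q²λ₂λ₁ − (2μq² + ξ)², which is nonzero. -/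

import Mathlib

/-! Both diagonal entries of the stress matrix equal `2μq² + ξ`, so the determinant is
`4μ²q²λ₁λ₂ - (2μq² + ξ)²`. It is negative because `2λ₁λ₂ ≤ λ₁² + λ₂² = 2q² + 3ξ/(2μ)`,
which gives `4μ²q²λ₁λ₂ ≤ 4μ²q⁴ + 3μξq² < (2μq² + ξ)²`; Cramer's rule then solves the system. -/

noncomputable def Ddet (μ ξ q : ℝ) : ℝ :=
  4 * μ ^ 2 * q ^ 2 * Real.sqrt (q ^ 2 + ξ / (2 * μ)) * Real.sqrt (q ^ 2 + ξ / μ)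
    - (2 * μ * q ^ 2 + ξ) ^ 2

theorem existsUnique_linear_system_of_det_ne_zero {K : Type*} [Field K] (a b c d : K)
    (h : a * d - b * c ≠ 0) (T₁ T₂ : K) :
    ∃! x : K × K, a * x.1 + b * x.2 = T₁ ∧ c * x.1 + d * x.2 = T₂ := by
  refine ⟨((d * T₁ - b * T₂) / (a * d - b * c), (a * T₂ - c * T₁) / (a * d - b * c)),
    ⟨?_, ?_⟩, ?_⟩
  · rw [mul_div_assoc', mul_div_assoc', ← add_div, div_eq_iff h]; ring
  · rw [mul_div_assoc', mul_div_assoc', ← add_div, div_eq_iff h]; ring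
  · rintro ⟨x, y⟩ ⟨e₁, e₂⟩
    simp only [Prod.mk.injEq]
    constructor
    · rw [eq_div_iff h]; linear_combination d * e₁ - b * e₂
    · rw [eq_div_iff h]; linear_combination a * e₂ - c * e₁

theorem stress_det_eq (μ q l₁ l₂ : ℝ) :
    ((-(μ * (l₁ ^ 2 + q ^ 2)) : ℝ) : ℂ) * ((2 * μ * l₂ ^ 2 : ℝ) : ℂ)
        - (2 * Complex.I * (q : ℂ) * (μ : ℂ) * (l₂ : ℂ)) *
          (2 * Complex.I * (q : ℂ) * (μ : ℂ) * (l₁ : ℂ))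
      = ((4 * μ ^ 2 * q ^ 2 * l₂ * l₁ - μ * (l₁ ^ 2 + q ^ 2) * (2 * μ * l₂ ^ 2) : ℝ) : ℂ) := by
  push_cast
  linear_combination (-4 * (q : ℂ) ^ 2 * (μ : ℂ) ^ 2 * (l₂ : ℂ) * (l₁ : ℂ)) * Complex.I_sq

section

variable {μ ξ : ℝ} (q : ℝ)

theorem mul_sqrt_add_div_sq_add_sq (hμ : 0 < μ) (hξ : 0 ≤ ξ) :
    μ * (Real.sqrt (q ^ 2 + ξ / μ) ^ 2 + q ^ 2) = 2 * μ * q ^ 2 + ξ := by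
  rw [Real.sq_sqrt (by positivity)]
  field_simp
  ring

theorem two_mul_sqrt_add_div_two_mul_sq (hμ : 0 < μ) (hξ : 0 ≤ ξ) :
    2 * μ * Real.sqrt (q ^ 2 + ξ / (2 * μ)) ^ 2 = 2 * μ * q ^ 2 + ξ := by
  rw [Real.sq_sqrt (by positivity)]
  field_simp

theorem Ddet_neg (hμ : 0 < μ) (hξ : 0 < ξ) : Ddet μ ξ q < 0 := by
  set l₁ := Real.sqrt (q ^ 2 + ξ / μ)
  set l₂ := Real.sqrt (q ^ 2 + ξ / (2 * μ))
  have hl₁ : μ * l₁ ^ 2 = μ * q ^ 2 + ξ := by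
    linear_combination mul_sqrt_add_div_sq_add_sq q hμ hξ.le
  have hl₂ : 2 * μ * l₂ ^ 2 = 2 * μ * q ^ 2 + ξ := two_mul_sqrt_add_div_two_mul_sq q hμ hξ.le
  have amgm : 4 * μ ^ 2 * q ^ 2 * l₂ * l₁ ≤ 2 * μ ^ 2 * q ^ 2 * (l₁ ^ 2 + l₂ ^ 2) := by
    nlinarith [mul_nonneg (mul_nonneg (sq_nonneg μ) (sq_nonneg q)) (sq_nonneg (l₁ - l₂))]
  have hξq : 0 < μ * ξ * q ^ 2 + ξ ^ 2 := by positivity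
  calc Ddet μ ξ q = 4 * μ ^ 2 * q ^ 2 * l₂ * l₁ - (2 * μ * q ^ 2 + ξ) ^ 2 := rfl
    _ ≤ 2 * μ ^ 2 * q ^ 2 * (l₁ ^ 2 + l₂ ^ 2) - (2 * μ * q ^ 2 + ξ) ^ 2 := by gcongr
    _ = -(μ * ξ * q ^ 2 + ξ ^ 2) := by linear_combination (2 * μ * q ^ 2) * hl₁ + μ * q ^ 2 * hl₂
    _ < 0 := neg_neg_of_pos hξq

end

/-- The 2×2 system matching the stress boundary conditions for
v = A∇⊥(e^{iqx+λ₁y}) + B∇(e^{iqx+λ₂y}) has determinant D(q) = 4μ²q²λ₂λ₁ − (2μq²+ξ)² ≠ 0,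
hence a unique solution for q ≠ 0. -/
theorem stress_matching_unique (μ ξ q : ℝ) (hμ : 0 < μ) (hξ : 0 < ξ)
    (lam₁ lam₂ : ℝ) (h₁ : lam₁ = Real.sqrt (q ^ 2 + ξ / μ))
    (h₂ : lam₂ = Real.sqrt (q ^ 2 + ξ / (2 * μ))) :
    (((-(μ * (lam₁ ^ 2 + q ^ 2)) : ℝ) : ℂ) * ((2 * μ * lam₂ ^ 2 : ℝ) : ℂ)
        - (2 * Complex.I * (q : ℂ) * (μ : ℂ) * (lam₂ : ℂ)) *
          (2 * Complex.I * (q : ℂ) * (μ : ℂ) * (lam₁ : ℂ))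
      = ((Ddet μ ξ q : ℝ) : ℂ)) ∧
    ((Ddet μ ξ q : ℝ) : ℂ) ≠ 0 ∧
    (q ≠ 0 → ∀ T₁ T₂ : ℂ, ∃! AB : ℂ × ℂ,
      ((-(μ * (lam₁ ^ 2 + q ^ 2)) : ℝ) : ℂ) * AB.1
          + (2 * Complex.I * (q : ℂ) * (μ : ℂ) * (lam₂ : ℂ)) * AB.2 = T₁ ∧
      (2 * Complex.I * (q : ℂ) * (μ : ℂ) * (lam₁ : ℂ)) * AB.1
          + ((2 * μ * lam₂ ^ 2 : ℝ) : ℂ) * AB.2 = T₂) := by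
  have hdet : ((-(μ * (lam₁ ^ 2 + q ^ 2)) : ℝ) : ℂ) * ((2 * μ * lam₂ ^ 2 : ℝ) : ℂ)
        - (2 * Complex.I * (q : ℂ) * (μ : ℂ) * (lam₂ : ℂ)) *
          (2 * Complex.I * (q : ℂ) * (μ : ℂ) * (lam₁ : ℂ))
      = ((Ddet μ ξ q : ℝ) : ℂ) := by
    rw [stress_det_eq, h₁, h₂, mul_sqrt_add_div_sq_add_sq q hμ hξ.le,
      two_mul_sqrt_add_div_two_mul_sq q hμ hξ.le, ← sq]
    rfl
  have hne : ((Ddet μ ξ q : ℝ) : ℂ) ≠ 0 := Complex.ofReal_ne_zero.mpr (Ddet_neg q hμ hξ).ne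
  exact ⟨hdet, hne, fun _ T₁ T₂ =>
    existsUnique_linear_system_of_det_ne_zero _ _ _ _ (hdet ▸ hne) T₁ T₂⟩
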